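/- arXiv:1408.4745 — 2 statements merged into one kernel-verified Lean document; each statement's English description precedes it below -/
import Mathlib

section
/- If A₁ blocks X → M in G and X blocks A₂ → M in G, then the set difference A₁ \ A₂ blocks X → M in G. -/
/-- A directed walk in the digraph with edge relation `E`: a nonempty list of
vertices in which consecutive vertices are joined by an edge. Blocking is
equivalent for walks and paths, so we use walks.  `Blocks E R M X` says that
`X ∩ R = ∅` and every directed walk from a vertex of `R` to a vertex of `M`
contains a vertex of `X`. -/
def Blocks {V : Type*} (E : V → V → Prop) (R M X : Set V) : Prop :=
  X ∩ R = ∅ ∧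
    ∀ (p : List V) (h : p ≠ []), p.Chain' E →
      p.head h ∈ R → p.getLast h ∈ M → ∃ v ∈ p, v ∈ X

/-!
A walk from `X` to `M` that avoided `A₁ \ A₂` would, after passing through `A₁` (hence
through `A₂`), have to return to `X` strictly later. Inducting on the walk, its tail then
already meets `A₁ \ A₂`.
-/

namespace Blocks

variable {V : Type*} {E : V → V → Prop} {R M X : Set V}

theorem disjoint (h : Blocks E R M X) : Disjoint X R :=
  Set.disjoint_iff_inter_eq_empty.mpr h.1

theorem exists_mem_of_mem (h : Blocks E R M X) {p : List V} (hp : p ≠ [])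
    (hchain : p.IsChain E) (hlast : p.getLast hp ∈ M) {a : V} (ha : a ∈ p) (haR : a ∈ R) :
    ∃ v ∈ p, v ∈ X := by
  obtain ⟨l₁, l₂, rfl⟩ := List.append_of_mem ha
  have hsuffix : (a :: l₂) <:+ l₁ ++ a :: l₂ := List.suffix_append l₁ _
  obtain ⟨v, hv, hvX⟩ := h.2 (a :: l₂) (List.cons_ne_nil a l₂) (hchain.suffix hsuffix) haR
    (by rwa [List.getLast_append_of_ne_nil] at hlast)
  exact ⟨v, hsuffix.subset hv, hvX⟩

end Blocks

theorem exists_mem_diff_of_mem_of_blocks {V : Type*} {E : V → V → Prop} {X M A₁ A₂ : Set V}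
    (hA₁ : Blocks E X M A₁) (hX : Blocks E A₂ M X) {p : List V} (hp : p ≠ [])
    (hchain : p.IsChain E) (hlast : p.getLast hp ∈ M) {x : V} (hx : x ∈ p) (hxX : x ∈ X) :
    ∃ v ∈ p, v ∈ A₁ \ A₂ := by
  induction p generalizing x with
  | nil => exact absurd rfl hp
  | cons v t ih =>
    have of_mem_tail : ∀ y ∈ t, y ∈ X → ∃ w ∈ v :: t, w ∈ A₁ \ A₂ := fun y hy hyX => by
      have ht : t ≠ [] := List.ne_nil_of_mem hy
      rw [List.getLast_cons ht] at hlast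
      obtain ⟨w, hw, hwA⟩ := ih ht hchain.tail hlast hy hyX
      exact ⟨w, List.mem_cons_of_mem v hw, hwA⟩
    rcases List.mem_cons.mp hx with rfl | hxt
    · obtain ⟨a, ha, haA₁⟩ := hA₁.exists_mem_of_mem hp hchain hlast hx hxX
      by_cases haA₂ : a ∈ A₂
      · -- `a ≠ x` since `A₁` misses `X`, so `X` is met again after `a`, inside the tail
        have hat : a ∈ t := (List.mem_cons.mp ha).resolve_left
          fun hax => hA₁.disjoint.ne_of_mem haA₁ hxX hax
        have ht : t ≠ [] := List.ne_nil_of_mem hat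
        rw [List.getLast_cons ht] at hlast
        obtain ⟨y, hy, hyX⟩ := hX.exists_mem_of_mem ht hchain.tail hlast hat haA₂
        exact of_mem_tail y hy hyX
      · exact ⟨a, ha, haA₁, haA₂⟩
    · exact of_mem_tail x hxt hxX

theorem blocks_diff_general {V : Type*} (E : V → V → Prop)
    (X M A₁ A₂ : Set V) (hA₁ : Blocks E X M A₁) (hX : Blocks E A₂ M X) :
    Blocks E X M (A₁ \ A₂) := by
  refine ⟨Set.disjoint_iff_inter_eq_empty.mp ?_, fun p hp hchain hhead hlast => ?_⟩
  · exact hA₁.disjoint.mono_left Set.sdiff_subset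
  · exact exists_mem_diff_of_mem_of_blocks hA₁ hX hp hchain hlast (List.head_mem hp) hhead

/-- If `A₁` blocks `X → M` and `X` blocks `A₂ → M`, then `A₁ \\ A₂` blocks
`X → M`. -/
theorem blocks_diff {V : Type*} [Fintype V] (E : V → V → Prop)
    (X M A₁ A₂ : Set V) (hA₁ : Blocks E X M A₁) (hX : Blocks E A₂ M X) :
    Blocks E X M (A₁ \ A₂) :=
  blocks_diff_general E X M A₁ A₂ hA₁ hX
end

section
/- Let R, X ⊆ V with R ∩ X = ∅. If X₀ ⊆ X and X₁ ⊆ X are both inclusion-minimal among the subsets of X that block R → X in G (i.e., each blocks R → X and no proper subset of it blocks R → X), then X₀ = X₁. In other words, the front front_G(R, X) — the inclusion-minimal subset of X blocking R → X — is unique. -/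
/-! Every walk from `R` to `X` enters `X` for the first time at a vertex of the front, the set
of vertices of `X` reachable from `R` by a walk whose earlier vertices avoid `X`. Conversely every
such walk must meet any blocking set `Y ⊆ X`, and can only do so at its last vertex. Hence the front
blocks `R → X` and lies inside every blocking `Y ⊆ X`, so it is the only minimal one. -/

theorem List.exists_eq_append_cons_of_exists_mem {α : Type*} {l : List α} {S : Set α}
    (h : ∃ x ∈ l, x ∈ S) : ∃ as x bs, l = as ++ x :: bs ∧ x ∈ S ∧ ∀ a ∈ as, a ∉ S := by
  classical
  obtain ⟨x, hx⟩ := Option.isSome_iff_exists.1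
    (List.find?_isSome (xs := l) (p := fun a ↦ decide (a ∈ S)) |>.2 (by simpa using h))
  obtain ⟨hxS, as, bs, rfl, has⟩ := List.find?_eq_some_iff_append.1 hx
  exact ⟨as, x, bs, rfl, by simpa using hxS, by simpa using has⟩

namespace Blocks

variable {V : Type*} (E : V → V → Prop) (R X : Set V)

def front : Set V :=
  {x | x ∈ X ∧ ∃ l : List V, (l ++ [x]).IsChain E ∧
    (l ++ [x]).head (List.concat_ne_nil x l) ∈ R ∧ ∀ v ∈ l, v ∉ X}

variable {E R X}

theorem front_subset {Y : Set V} (hYX : Y ⊆ X) (hY : Blocks E R X Y) : front E R X ⊆ Y := by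
  rintro x ⟨hxX, l, hchain, hhead, hl⟩
  obtain ⟨v, hv, hvY⟩ := hY.2 (l ++ [x]) _ hchain hhead (by simpa using hxX)
  rcases List.mem_append.1 hv with hv | hv
  · exact absurd (hYX hvY) (hl v hv)
  · rwa [List.mem_singleton.1 hv] at hvY

theorem exists_mem_front {p : List V} (hp : p ≠ []) (hchain : p.IsChain E)
    (hhead : p.head hp ∈ R) (hlast : p.getLast hp ∈ X) : ∃ v ∈ p, v ∈ front E R X := by
  obtain ⟨l, x, t, rfl, hxX, hl⟩ :=
    List.exists_eq_append_cons_of_exists_mem ⟨_, List.getLast_mem hp, hlast⟩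
  have hsplit : l ++ x :: t = (l ++ [x]) ++ t := by simp
  refine ⟨x, by simp, hxX, l, ?_, ?_, hl⟩
  · exact (hsplit ▸ hchain).left_of_append
  · cases l <;> simpa using hhead

theorem blocks_front {Y : Set V} (hYX : Y ⊆ X) (hY : Blocks E R X Y) :
    Blocks E R X (front E R X) := by
  refine ⟨Set.subset_empty_iff.1 ?_, fun p hp hchain hhead hlast ↦
    exists_mem_front hp hchain hhead hlast⟩
  exact hY.1 ▸ Set.inter_subset_inter_left R (front_subset hYX hY)

theorem eq_front_of_minimal {Y : Set V} (hYX : Y ⊆ X) (hY : Blocks E R X Y)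
    (hmin : ∀ Z ⊂ Y, ¬ Blocks E R X Z) : Y = front E R X := by
  by_contra hne
  exact hmin _ ((front_subset hYX hY).ssubset_of_ne (Ne.symm hne)) (blocks_front hYX hY)

end Blocks

theorem front_unique_general {V : Type*} (E : V → V → Prop)
    (R X X₀ X₁ : Set V)
    (h₀ : X₀ ⊆ X) (hb₀ : Blocks E R X X₀) (hmin₀ : ∀ Y ⊂ X₀, ¬ Blocks E R X Y)
    (h₁ : X₁ ⊆ X) (hb₁ : Blocks E R X X₁) (hmin₁ : ∀ Y ⊂ X₁, ¬ Blocks E R X Y) :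
    X₀ = X₁ := by
  rw [Blocks.eq_front_of_minimal h₀ hb₀ hmin₀, Blocks.eq_front_of_minimal h₁ hb₁ hmin₁]

/-- Uniqueness of the front: two inclusion-minimal subsets of `X` blocking
`R → X` coincide. -/
theorem front_unique {V : Type*} [Fintype V] (E : V → V → Prop)
    (R X X₀ X₁ : Set V) (hRX : R ∩ X = ∅)
    (h₀ : X₀ ⊆ X) (hb₀ : Blocks E R X X₀) (hmin₀ : ∀ Y ⊂ X₀, ¬ Blocks E R X Y)
    (h₁ : X₁ ⊆ X) (hb₁ : Blocks E R X X₁) (hmin₁ : ∀ Y ⊂ X₁, ¬ Blocks E R X Y) :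
    X₀ = X₁ :=
  front_unique_general E R X X₀ X₁ h₀ hb₀ hmin₀ h₁ hb₁ hmin₁
end
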